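/- arXiv:2310.02068 — 2 statements merged into one kernel-verified Lean document; each statement's English description precedes it below -/
import Mathlib

section
/- The explicit upwind scheme n_j^{m+1} = n_j^m − (Δt/Δs)(n_j^m − n_{j−1}^m) − Δt·p(s_j, N^m)n_j^m for j ≥ 2, and n_1^{m+1} = n_1^m − (Δt/Δs)(n_1^m − N^m) − Δt·p(s_1,N^m)n_1^m, where N^m = Δs Σ_j p(s_j,N^m)n_j^m, conserves the discrete mass: Σ_j Δs·n_j^m = Σ_j Δs·n_j^0 for all m. -/
/-!
The scheme is in conservation form: summed over all cells, the transport terms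
`Δt/Δs (n_j - n_{j-1})` telescope to `-Δt/Δs · N^m`, the inflow through the boundary,
while the fixed-point equation for `N^m` says this inflow equals the total loss
`Δt Σ_j p(s_j, N^m) n_j^m`.
-/

theorem tsum_upwind_step {a u d : ℕ → ℝ} {b c : ℝ} (ha : Summable a) (hd : Summable d)
    (hu₀ : u 0 = a 0 - c * (a 0 - b) - d 0)
    (hu : ∀ j, u (j + 1) = a (j + 1) - c * (a (j + 1) - a j) - d (j + 1)) :
    ∑' j, u j = ∑' j, a j + c * b - ∑' j, d j := by
  have ha' : Summable fun j => a (j + 1) := (summable_nat_add_iff 1).mpr ha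
  have hd' : Summable fun j => d (j + 1) := (summable_nat_add_iff 1).mpr hd
  have hshift : ∑' j, u (j + 1) =
      ∑' j, a (j + 1) - c * (∑' j, a (j + 1) - ∑' j, a j) - ∑' j, d (j + 1) := by
    rw [tsum_congr hu, (ha'.sub (ha'.sub ha |>.mul_left c)).tsum_sub hd',
      ha'.tsum_sub (ha'.sub ha |>.mul_left c), tsum_mul_left, ha'.tsum_sub ha]
  have hu' : Summable fun j => u (j + 1) := by
    simpa only [← hu] using (ha'.sub (ha'.sub ha |>.mul_left c)).sub hd'
  rw [((summable_nat_add_iff 1).mp hu').tsum_eq_zero_add, ha.tsum_eq_zero_add,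
    hd.tsum_eq_zero_add, hshift, hu₀, ha.tsum_eq_zero_add]
  ring

theorem upwind_mass_conservation_general
    (p : ℝ → ℝ → ℝ) (nn : ℕ → ℕ → ℝ) (N : ℕ → ℝ) (s : ℕ → ℝ) (Δt Δs : ℝ)
    (hΔs : 0 < Δs)
    (hsum : ∀ m, Summable (nn m))
    (hsum' : ∀ m, Summable fun j => p (s j) (N m) * nn m j)
    (hN : ∀ m, N m = Δs * ∑' j, p (s j) (N m) * nn m j)
    (hb : ∀ m, nn (m + 1) 0 =
        nn m 0 - Δt / Δs * (nn m 0 - N m) - Δt * p (s 0) (N m) * nn m 0)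
    (hrec : ∀ m j, nn (m + 1) (j + 1) =
        nn m (j + 1) - Δt / Δs * (nn m (j + 1) - nn m j)
          - Δt * p (s (j + 1)) (N m) * nn m (j + 1)) :
    ∀ m, (∑' j, Δs * nn m j) = ∑' j, Δs * nn 0 j := by
  have hstep : ∀ m, ∑' j, nn (m + 1) j = ∑' j, nn m j := fun m => by
    have hloss : ∑' j, Δt * p (s j) (N m) * nn m j = Δt / Δs * N m := by
      simp only [mul_assoc, tsum_mul_left]
      conv_rhs => rw [hN m]
      field_simp
    have hloss_summable : Summable fun j => Δt * p (s j) (N m) * nn m j := by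
      simpa only [mul_assoc] using (hsum' m).mul_left Δt
    rw [tsum_upwind_step (hsum m) hloss_summable (hb m) (hrec m), hloss, add_sub_cancel_right]
  intro m
  induction m with
  | zero => rfl
  | succ m ih => rw [← ih, tsum_mul_left, tsum_mul_left, hstep]

/-- the explicit upwind scheme for the ITM equation conserves the
discrete mass `Σ_j Δs n_j^m`. Cells are indexed by `j : ℕ` (cell `j` has center
`s j = (j + 1/2)Δs`), the boundary cell `j = 0` uses the discharge value `N^m`
which solves the discrete fixed-point equation. -/
theorem upwind_mass_conservation
    (p : ℝ → ℝ → ℝ) (nn : ℕ → ℕ → ℝ) (N : ℕ → ℝ) (s : ℕ → ℝ) (Δt Δs : ℝ)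
    (hΔt : 0 < Δt) (hΔs : 0 < Δs)
    (hs : ∀ j, s j = ((j : ℝ) + 1 / 2) * Δs)
    (hsum : ∀ m, Summable (nn m))
    (hsum' : ∀ m, Summable fun j => p (s j) (N m) * nn m j)
    (hN : ∀ m, N m = Δs * ∑' j, p (s j) (N m) * nn m j)
    (hb : ∀ m, nn (m + 1) 0 =
        nn m 0 - Δt / Δs * (nn m 0 - N m) - Δt * p (s 0) (N m) * nn m 0)
    (hrec : ∀ m j, nn (m + 1) (j + 1) =
        nn m (j + 1) - Δt / Δs * (nn m (j + 1) - nn m j)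
          - Δt * p (s (j + 1)) (N m) * nn m (j + 1)) :
    ∀ m, (∑' j, Δs * nn m j) = ∑' j, Δs * nn 0 j :=
  upwind_mass_conservation_general p nn N s Δt Δs hΔs hsum hsum' hN hb hrec
end

section
/- Let p(s,X) = X² + 1 and α(t) = e^{−t}, and suppose (n,N,X) solves the DDM system with mass conservation so that N(t) = X(t)² + 1 and X(t) = ∫₀^t e^{−(t−s)}(X(s)²+1) ds. Then X satisfies X'(t) = X(t)² − X(t) + 1 with X(0) = 0, and X blows up in finite time; in particular the continuous solution of the DDM equation cannot be extended to all t > 0. -/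
open MeasureTheory Set Real

/-! The kernel `e^{-(t-τ)}` factors as `e^{-t} e^{τ}`, so the DDM equation reads
`X(t) = e^{-t} ∫₀ᵗ e^{τ}(X(τ)² + 1) dτ`; the product rule and the fundamental theorem of calculus
turn it into the Riccati equation `X' = X² - X + 1`. Since `X² - X + 1 > 0`, `X` increases and
becomes positive, and since `X² - X + 1 ≥ X²/2`, the reciprocal `1/X` then decreases with slope
at most `-1/2`, so it would have to reach `0` in finite time. -/

theorem integral_exp_neg_sub_mul (f : ℝ → ℝ) (a t : ℝ) :
    ∫ τ in a..t, exp (-(t - τ)) * f τ = exp (-t) * ∫ τ in a..t, exp τ * f τ := by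
  rw [← intervalIntegral.integral_const_mul]
  refine intervalIntegral.integral_congr fun τ _ => ?_
  rw [← mul_assoc, ← exp_add, neg_sub, sub_eq_neg_add]

theorem hasDerivAt_integral_exp_neg_sub_mul {f : ℝ → ℝ} {a T t : ℝ}
    (hf : ContinuousOn f (Icc a T)) (ht : t ∈ Ioo a T) :
    HasDerivAt (fun u => ∫ τ in a..u, exp (-(u - τ)) * f τ)
      (f t - ∫ τ in a..t, exp (-(t - τ)) * f τ) t := by
  have hg : ContinuousOn (fun τ => exp τ * f τ) (Icc a T) :=
    continuous_exp.continuousOn.mul hf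
  have hnhds : Icc a T ∈ nhds t := Icc_mem_nhds ht.1 ht.2
  have hint : IntervalIntegrable (fun τ => exp τ * f τ) volume a t :=
    (hg.mono (by rw [uIcc_of_le ht.1.le]; exact Icc_subset_Icc_right ht.2.le)).intervalIntegrable
  have hF : HasDerivAt (fun u => ∫ τ in a..u, exp τ * f τ) (exp t * f t) t :=
    intervalIntegral.integral_hasDerivAt_right hint
      ⟨Icc a T, hnhds, hg.aestronglyMeasurable measurableSet_Icc⟩ (hg.continuousAt hnhds)
  have hprod := (hasDerivAt_neg t).exp.mul hF
  simp only [integral_exp_neg_sub_mul f a]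
  refine hprod.congr_deriv ?_
  rw [← mul_assoc, ← exp_add, neg_add_cancel, exp_zero]
  ring

theorem hasDerivAt_of_eq_integral_exp_neg_sub_mul {X g : ℝ → ℝ} {a T t : ℝ}
    (hg : ContinuousOn g (Icc a T))
    (hX : ∀ u ∈ Icc a T, X u = ∫ τ in a..u, exp (-(u - τ)) * g τ)
    (ht : t ∈ Ioo a T) :
    HasDerivAt X (g t - X t) t := by
  rw [hX t (Ioo_subset_Icc_self ht)]
  refine (hasDerivAt_integral_exp_neg_sub_mul hg ht).congr_of_eventuallyEq ?_
  filter_upwards [Icc_mem_nhds ht.1 ht.2] using hX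

theorem false_of_hasDerivAt_of_mul_sq_le {X X' : ℝ → ℝ} {a c : ℝ} (hc : 0 < c) (ha : 0 < X a)
    (hX : ContinuousOn X (Ici a)) (hder : ∀ t ∈ Ioi a, HasDerivAt X (X' t) t)
    (hgrowth : ∀ t ∈ Ioi a, c * X t ^ 2 ≤ X' t) : False := by
  have hmono : MonotoneOn X (Ici a) := by
    refine monotoneOn_of_deriv_nonneg (convex_Ici a) hX ?_ ?_ <;> rw [interior_Ici]
    · exact fun t ht => (hder t ht).differentiableAt.differentiableWithinAt
    · intro t ht
      rw [(hder t ht).deriv]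
      exact (by positivity : 0 ≤ c * X t ^ 2).trans (hgrowth t ht)
  have hpos : ∀ t ∈ Ici a, 0 < X t := fun t ht => ha.trans_le (hmono self_mem_Ici ht ht)
  have hinv : ∀ t ∈ Ioi a, HasDerivAt (fun u => (X u)⁻¹) (-X' t / X t ^ 2) t :=
    fun t ht => (hder t ht).inv (hpos t (mem_Ici_of_Ioi ht)).ne'
  have hslope : ∀ t ∈ Ioi a, -X' t / X t ^ 2 ≤ -c := by
    intro t ht
    rw [div_le_iff₀ (pow_pos (hpos t (mem_Ici_of_Ioi ht)) 2)]
    linarith [hgrowth t ht]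
  -- `1/X` starts at `1/X(a)` and decreases with slope at most `-c`, so it vanishes by this time.
  set s := a + (c * X a)⁻¹
  have hs : a ≤ s := le_add_of_nonneg_right (by positivity)
  have hdecay : (X s)⁻¹ - (X a)⁻¹ ≤ -c * (s - a) := by
    refine (convex_Ici a).image_sub_le_mul_sub_of_deriv_le
      (hX.inv₀ fun t ht => (hpos t ht).ne') ?_ ?_ a self_mem_Ici s hs hs <;> rw [interior_Ici]
    · exact fun t ht => (hinv t ht).differentiableAt.differentiableWithinAt
    · exact fun t ht => (hinv t ht).deriv ▸ hslope t ht
  have hend : -c * (s - a) = -(X a)⁻¹ := by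
    rw [add_sub_cancel_left]
    field_simp
  linarith [inv_pos.2 (hpos s hs)]

theorem not_exists_global_riccati_solution :
    ¬∃ X : ℝ → ℝ, ContinuousOn X (Ici 0) ∧ X 0 = 0 ∧
      ∀ t ∈ Ioi (0 : ℝ), HasDerivAt X (X t ^ 2 - X t + 1) t := by
  rintro ⟨X, hX, h0, hder⟩
  have hX1 : 0 < X 1 := by
    have hmono : StrictMonoOn X (Ici 0) := by
      refine strictMonoOn_of_deriv_pos (convex_Ici 0) hX fun t ht => ?_
      rw [interior_Ici] at ht
      rw [(hder t ht).deriv]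
      nlinarith [sq_nonneg (X t - 1 / 2)]
    simpa [h0] using hmono self_mem_Ici (mem_Ici.2 zero_le_one) zero_lt_one
  refine false_of_hasDerivAt_of_mul_sq_le (c := 1 / 2) one_half_pos hX1
    (hX.mono (Ici_subset_Ici.2 zero_le_one))
    (fun t ht => hder t (Ioi_subset_Ioi zero_le_one ht)) fun t _ => ?_
  nlinarith [sq_nonneg (X t - 1)]

theorem hasDerivAt_riccati_of_eq_integral {X : ℝ → ℝ} {T t : ℝ} (hXc : ContinuousOn X (Icc 0 T))
    (hX : ∀ u ∈ Icc (0 : ℝ) T, X u = ∫ τ in (0 : ℝ)..u, exp (-(u - τ)) * (X τ ^ 2 + 1))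
    (ht : t ∈ Ioo 0 T) :
    HasDerivAt X (X t ^ 2 - X t + 1) t := by
  convert hasDerivAt_of_eq_integral_exp_neg_sub_mul (g := fun τ => X τ ^ 2 + 1)
    ((hXc.pow 2).add continuousOn_const) hX ht using 1
  ring

/-- DDM blow-up example with `p(s,X) = X² + 1`, `α(t) = e^{-t}`.
Any continuous solution of `X(t) = ∫₀^t e^{-(t-s)}(X(s)²+1) ds` satisfies
`X(0) = 0` and the Riccati ODE `X' = X² - X + 1`, and there is no continuous
solution defined for all `t ≥ 0` (the solution blows up in finite time). -/
theorem ddm_blowup_example :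
    (∀ (X : ℝ → ℝ) (T : ℝ), 0 < T → ContinuousOn X (Icc 0 T) →
      (∀ t ∈ Icc (0:ℝ) T,
        X t = ∫ τ in (0:ℝ)..t, Real.exp (-(t - τ)) * ((X τ) ^ 2 + 1)) →
      X 0 = 0 ∧ ∀ t ∈ Ioo (0:ℝ) T, HasDerivAt X ((X t) ^ 2 - X t + 1) t) ∧
    ¬∃ X : ℝ → ℝ, ContinuousOn X (Ici 0) ∧
      ∀ t ∈ Ici (0:ℝ),
        X t = ∫ τ in (0:ℝ)..t, Real.exp (-(t - τ)) * ((X τ) ^ 2 + 1) := by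
  refine ⟨fun X T hT hXc hX => ⟨by simpa using hX 0 ⟨le_rfl, hT.le⟩,
    fun t => hasDerivAt_riccati_of_eq_integral hXc hX⟩, fun ⟨X, hXc, hX⟩ => ?_⟩
  refine not_exists_global_riccati_solution ⟨X, hXc, by simpa using hX 0 self_mem_Ici, ?_⟩
  intro t ht
  exact hasDerivAt_riccati_of_eq_integral (T := t + 1) (hXc.mono Icc_subset_Ici_self)
    (fun u hu => hX u hu.1) ⟨ht, lt_add_one t⟩
end
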